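/- Let Y be a real-valued random variable with all absolute moments finite and fix a nonzero real λ. Then for all integers n≥j≥0, {n brace j}_{Y,λ} = Σ_{l=j}^{n} Σ_{k=l}^{n} λ^{k−l} (−1)^{n−k} S_{1,λ}^Y(n,k) L(k,l) {l brace j}_λ. -/

import Mathlib

open MeasureTheory Finset

noncomputable section

/-- The degenerate falling factorial `(x)_{n,λ} = x(x-λ)⋯(x-(n-1)λ)`. -/
def dff (lam x : ℝ) (n : ℕ) : ℝ := ∏ i ∈ Finset.range n, (x - i * lam)

/-- The degenerate rising factorial `⟨x⟩_{n,λ} = x(x+λ)⋯(x+(n-1)λ)`. -/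
def drf (lam x : ℝ) (n : ℕ) : ℝ := ∏ i ∈ Finset.range n, (x + i * lam)

/-- The ordinary falling factorial `(x)_n = x(x-1)⋯(x-n+1)`. -/
def ffall (x : ℝ) (n : ℕ) : ℝ := ∏ i ∈ Finset.range n, (x - i)

/-- The ordinary rising factorial `⟨x⟩_n = x(x+1)⋯(x+n-1)`. -/
def frise (x : ℝ) (n : ℕ) : ℝ := ∏ i ∈ Finset.range n, (x + i)

/-- Composition `f ∘ g` of formal power series, valid when `g` has zero constant term. -/
def pscomp (f g : PowerSeries ℝ) : PowerSeries ℝ :=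
  PowerSeries.mk fun n =>
    ∑ k ∈ Finset.range (n + 1), PowerSeries.coeff (R := ℝ) k f * PowerSeries.coeff (R := ℝ) n (g ^ k)

/-- The degenerate moment generating series `F_Y = Σ_{n≥0} E[(Y)_{n,λ}] X^n/n!`. -/
def momSeries (lam : ℝ) {Ω : Type*} [MeasurableSpace Ω] (μ : Measure Ω) (Y : Ω → ℝ) :
    PowerSeries ℝ :=
  PowerSeries.mk fun n => (∫ ω, dff lam (Y ω) n ∂μ) / (n.factorial : ℝ)

/-- Taylor series at `u = 0` of the degenerate logarithm `log_λ(1+u)`: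
`Σ_{n≥1} λ^{n-1} (1)_{n,1/λ} u^n/n!`. -/
def degLogSeries (lam : ℝ) : PowerSeries ℝ :=
  PowerSeries.mk fun n => if n = 0 then 0 else lam ^ (n - 1) * dff (1 / lam) 1 n / (n.factorial : ℝ)

/-- `G_Y`, the degenerate cumulant generating series `log_{-λ}(F_Y)`, i.e. the substitution of
`F_Y - 1` into the Taylor series of `log_{-λ}(1+u)`. -/
def cumSeries (lam : ℝ) {Ω : Type*} [MeasurableSpace Ω] (μ : Measure Ω) (Y : Ω → ℝ) :
    PowerSeries ℝ :=
  pscomp (degLogSeries (-lam)) (momSeries lam μ Y - 1)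

/-- The degenerate cumulants `κ_{n,λ}(Y) := n!·(coefficient of X^n in G_Y)`. -/
def degCumulant (lam : ℝ) {Ω : Type*} [MeasurableSpace Ω] (μ : Measure Ω) (Y : Ω → ℝ)
    (n : ℕ) : ℝ :=
  (n.factorial : ℝ) * PowerSeries.coeff (R := ℝ) n (cumSeries lam μ Y)

/-- The probabilistic degenerate Stirling numbers of the second kind
`{n brace k}_{Y,λ} := n!·(coefficient of X^n in (F_Y - 1)^k/k!)`. -/
def braceY (lam : ℝ) {Ω : Type*} [MeasurableSpace Ω] (μ : Measure Ω) (Y : Ω → ℝ)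
    (n k : ℕ) : ℝ :=
  (n.factorial : ℝ) * PowerSeries.coeff (R := ℝ) n ((momSeries lam μ Y - 1) ^ k) / (k.factorial : ℝ)

/-- The probabilistic degenerate Stirling numbers of the first kind, defined by
`(-1)^{n-k} S_{1,λ}^Y(n,k) := n!·(coefficient of X^n in G_Y^k/k!)`. -/
def S1Y (lam : ℝ) {Ω : Type*} [MeasurableSpace Ω] (μ : Measure Ω) (Y : Ω → ℝ)
    (n k : ℕ) : ℝ :=
  (-1 : ℝ) ^ (n - k) * ((n.factorial : ℝ) * PowerSeries.coeff (R := ℝ) n ((cumSeries lam μ Y) ^ k) / (k.factorial : ℝ))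

/-- Taylor series of `log(1+u)`: `Σ_{n≥1} (-1)^{n-1} u^n/n`. -/
def logSeries : PowerSeries ℝ :=
  PowerSeries.mk fun n => if n = 0 then 0 else (-1 : ℝ) ^ (n - 1) / n

/-- `F^x := exp (x · Log F)` for a power series `F` with constant term `1`. -/
def psPow (F : PowerSeries ℝ) (x : ℝ) : PowerSeries ℝ :=
  pscomp (PowerSeries.exp ℝ) (PowerSeries.C (R := ℝ) x * pscomp logSeries (F - 1))

/-- `F ↦ F/X`, i.e. the shift sending `Σ a_{n+1} X^{n+1}` (with `a_0 = 0`) to `Σ a_{n+1} X^n`. -/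
def shiftDown (F : PowerSeries ℝ) : PowerSeries ℝ :=
  PowerSeries.mk fun n => PowerSeries.coeff (R := ℝ) (n + 1) F

/-- The probabilistic degenerate Bernoulli polynomials associated with `Y`:
`Σ_{n≥0} β_{n,λ}^Y(x) X^n/n! = (X/(F_Y-1))·F_Y^x`. -/
def probBernoulli (lam : ℝ) {Ω : Type*} [MeasurableSpace Ω] (μ : Measure Ω) (Y : Ω → ℝ)
    (n : ℕ) (x : ℝ) : ℝ :=
  (n.factorial : ℝ) *
    PowerSeries.coeff (R := ℝ) n ((shiftDown (momSeries lam μ Y - 1))⁻¹ * psPow (momSeries lam μ Y) x)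

/-- The probabilistic degenerate Euler polynomials associated with `Y`:
`Σ_{n≥0} 𝓔_{n,λ}^Y(x) X^n/n! = (2/(F_Y+1))·F_Y^x`. -/
def probEuler (lam : ℝ) {Ω : Type*} [MeasurableSpace Ω] (μ : Measure Ω) (Y : Ω → ℝ)
    (n : ℕ) (x : ℝ) : ℝ :=
  (n.factorial : ℝ) *
    PowerSeries.coeff (R := ℝ) n
      (PowerSeries.C (R := ℝ) 2 * (momSeries lam μ Y + 1)⁻¹ * psPow (momSeries lam μ Y) x)

/-!
Put `A = F_Y - 1`. Since `ℓ_{-λ}(u) = (1 - (1+u)^{-λ})/λ`, substituting it into `X/(1-λX)` gives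
`((1+u)^λ - 1)/λ`, which `e_λ(t) - 1 = (1+λt)^{1/λ} - 1` sends back to `u`. Hence
`A = (e_λ - 1) ∘ (X/(1-λX)) ∘ G_Y`, and expanding the `j`-th power of this triple composition
coefficientwise gives the double sum once the coefficients are identified:
`n! [X^n] G_Y^k / k! = (-1)^{n-k} S_{1,λ}^Y(n,k)`, while `l! [X^l] (e_λ-1)^j / j! = {l brace j}_λ`
and `k! [X^k] (X/(1-λX))^l / l! = λ^{k-l} L(k,l)`. The last two hold because
`(1+E)^x = Σ_k binom(x,k) E^k` expands `(x)_{l,λ} = l! [X^l] e_λ^x` and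
`⟨x⟩_k = k! [X^k] (1-X)^{-x}` in the falling factorial basis, and such an expansion is unique
(already at natural `x`).
-/

open PowerSeries
open scoped Nat

theorem ffall_eq_eval (x : ℝ) (n : ℕ) : ffall x n = (descPochhammer ℝ n).eval x :=
  (descPochhammer_eval_eq_prod_range n x).symm

theorem ffall_natCast (i k : ℕ) : ffall i k = i.descFactorial k := by
  rw [ffall_eq_eval, descPochhammer_eval_eq_descFactorial]

theorem ffall_neg (x : ℝ) (n : ℕ) : ffall (-x) n = (-1) ^ n * frise x n := by
  have h : ∀ i ∈ range n, -x - i = -1 * (x + i) := fun i _ => by ring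
  rw [ffall, prod_congr rfl h, prod_mul_distrib, prod_const, card_range, frise]

theorem frise_one (n : ℕ) : frise 1 n = n ! := by
  rw [frise, ← prod_range_add_one_eq_factorial]
  push_cast
  exact prod_congr rfl fun i _ => add_comm _ _

theorem dff_eq_pow_mul_ffall {lam : ℝ} (hlam : lam ≠ 0) (x : ℝ) (n : ℕ) :
    dff lam x n = lam ^ n * ffall (x / lam) n := by
  have h : ∀ i ∈ range n, x - i * lam = lam * (x / lam - i) := fun i _ => by field_simp
  rw [dff, prod_congr rfl h, prod_mul_distrib, prod_const, card_range, ffall]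

theorem ringChoose_eq_ffall_div (x : ℝ) (n : ℕ) : Ring.choose x n = ffall x n / n ! := by
  rw [Ring.choose_eq_smul, ffall_eq_eval, Polynomial.descPochhammer_smeval_eq_ascPochhammer,
    Polynomial.ascPochhammer_smeval_eq_eval, descPochhammer_eval_eq_ascPochhammer, smul_eq_mul,
    inv_mul_eq_div]

theorem eq_zero_of_sum_mul_ffall_natCast_eq_zero {m : ℕ} {c : ℕ → ℝ}
    (h : ∀ i ≤ m, ∑ k ∈ range (m + 1), c k * ffall i k = 0) : ∀ k ≤ m, c k = 0 := by
  intro k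
  induction k using Nat.strong_induction_on with
  | _ k ih =>
    intro hkm
    have hsum : ∑ t ∈ range (m + 1), c t * ffall k t = c k * ffall k k := by
      refine sum_eq_single k (fun t _ htk => ?_) (by simp; omega)
      rcases lt_or_gt_of_ne htk with hlt | hgt
      · rw [ih t hlt (by omega), zero_mul]
      · rw [ffall_natCast, Nat.descFactorial_eq_zero_iff_lt.2 hgt, Nat.cast_zero, mul_zero]
    have hk : ffall (k : ℝ) k ≠ 0 := by
      rw [ffall_natCast, Nat.descFactorial_self]
      positivity
    exact (mul_eq_zero.1 (hsum ▸ h k hkm)).resolve_right hk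

namespace PowerSeries

section CommRing

variable {R : Type*} [CommRing R]

theorem coeff_pow_of_lt {f : R⟦X⟧} (hf : constantCoeff f = 0) {j k : ℕ} (h : k < j) :
    coeff k (f ^ j) = 0 :=
  X_pow_dvd_iff.1 (pow_dvd_pow_of_dvd (X_dvd_iff.2 hf) j) k h

theorem coeff_subst_eq_sum_range {g : R⟦X⟧} (hg : constantCoeff g = 0) (f : R⟦X⟧) (n : ℕ) :
    coeff n (f.subst g) = ∑ k ∈ range (n + 1), coeff k f * coeff n (g ^ k) := by
  rw [coeff_subst' (HasSubst.of_constantCoeff_zero' hg),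
    finsum_eq_sum_of_support_subset (s := range (n + 1))]
  · simp only [smul_eq_mul]
  · intro k hk
    by_contra hkn
    exact hk (by simp only [coeff_pow_of_lt hg (by simpa using hkn : n < k), smul_zero])

theorem coeff_pow_subst_eq_sum_Icc {f g : R⟦X⟧} (hf : constantCoeff f = 0)
    (hg : constantCoeff g = 0) (j n : ℕ) :
    coeff n ((f.subst g) ^ j) = ∑ k ∈ Icc j n, coeff k (f ^ j) * coeff n (g ^ k) := by
  rw [← subst_pow (HasSubst.of_constantCoeff_zero' hg), coeff_subst_eq_sum_range hg]
  refine (sum_subset (fun k hk => ?_) fun k hk hkj => ?_).symm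
  · simp only [mem_Icc, mem_range] at hk ⊢
    omega
  · simp only [mem_Icc, mem_range, not_and, not_le] at hk hkj
    rw [coeff_pow_of_lt hf (by omega), zero_mul]

theorem coeff_pow_subst_subst {f g h : R⟦X⟧} (hf : constantCoeff f = 0)
    (hg : constantCoeff g = 0) (hh : constantCoeff h = 0) (j n : ℕ) :
    coeff n ((f.subst (g.subst h)) ^ j) = ∑ l ∈ Icc j n, ∑ k ∈ Icc l n,
      coeff l (f ^ j) * coeff k (g ^ l) * coeff n (h ^ k) := by
  rw [coeff_pow_subst_eq_sum_Icc hf (constantCoeff_subst_eq_zero hh g hg)]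
  refine sum_congr rfl fun l _ => ?_
  rw [coeff_pow_subst_eq_sum_Icc hg hh, mul_sum]
  simp only [mul_assoc]

theorem subst_rescale {g : R⟦X⟧} (hg : constantCoeff g = 0) (c : R) (f : R⟦X⟧) :
    (rescale c f).subst g = f.subst (c • g) := by
  have hs := HasSubst.of_constantCoeff_zero' hg
  rw [rescale_eq_subst, subst_comp_subst_apply (HasSubst.smul_X' c) hs, subst_smul hs, subst_X hs]

theorem subst_one {g : R⟦X⟧} (hg : constantCoeff g = 0) : (1 : R⟦X⟧).subst g = 1 := by
  rw [← coe_substAlgHom (HasSubst.of_constantCoeff_zero' hg), map_one]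

theorem binomialSeries_pow {A : Type*} [Ring A] [Algebra R A] [BinomialRing R] (r : R) (i : ℕ) :
    binomialSeries A r ^ i = binomialSeries A (i * r) := by
  induction i with
  | zero => simp
  | succ i ih => rw [pow_succ, ih, ← binomialSeries_add]; push_cast; ring_nf

end CommRing

theorem coeff_binomialSeries (r : ℝ) (n : ℕ) :
    coeff n (binomialSeries ℝ r) = ffall r n / n ! := by
  rw [binomialSeries_coeff, smul_eq_mul, mul_one, ringChoose_eq_ffall_div]

theorem one_add_pow_eq_subst {E : ℝ⟦X⟧} (hE : constantCoeff E = 0) (i : ℕ) :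
    (1 + E) ^ i = (binomialSeries ℝ (i : ℝ)).subst E := by
  have hs := HasSubst.of_constantCoeff_zero' hE
  rw [binomialSeries_nat, subst_pow hs, subst_add hs, subst_one hE, subst_X hs]

theorem binomialSeries_subst (a b : ℝ) :
    (binomialSeries ℝ b).subst (binomialSeries ℝ a - 1) = binomialSeries ℝ (a * b) := by
  have hs : constantCoeff (binomialSeries ℝ a - 1) = 0 := by simp
  ext n
  -- Both coefficients are polynomials in `b`, and they agree at natural `b`.
  set c : ℕ → ℝ := fun k => coeff n ((binomialSeries ℝ a - 1) ^ k)
  let P : Polynomial ℝ := ∑ k ∈ range (n + 1),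
    Polynomial.C (c k / k !) * descPochhammer ℝ k
  let Q : Polynomial ℝ := Polynomial.C (n ! : ℝ)⁻¹ *
    (descPochhammer ℝ n).comp (Polynomial.C a * Polynomial.X)
  have hP : ∀ x, P.eval x = coeff n ((binomialSeries ℝ x).subst (binomialSeries ℝ a - 1)) := by
    intro x
    rw [coeff_subst_eq_sum_range hs, Polynomial.eval_finsetSum]
    refine sum_congr rfl fun k _ => ?_
    rw [Polynomial.eval_mul, Polynomial.eval_C, coeff_binomialSeries, ffall_eq_eval]
    ring
  have hQ : ∀ x, Q.eval x = coeff n (binomialSeries ℝ (a * x)) := by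
    intro x
    rw [Polynomial.eval_mul, Polynomial.eval_C, Polynomial.eval_comp, Polynomial.eval_mul,
      Polynomial.eval_C, Polynomial.eval_X, coeff_binomialSeries, ffall_eq_eval, inv_mul_eq_div]
  have hnat (m : ℕ) : P.eval (m : ℝ) = Q.eval (m : ℝ) := by
    rw [hP, hQ, ← one_add_pow_eq_subst hs, add_sub_cancel, binomialSeries_pow, mul_comm]
  have hPQ : P = Q := Polynomial.eq_of_infinite_eval_eq P Q
    ((Set.infinite_range_of_injective Nat.cast_injective).mono (by rintro _ ⟨m, rfl⟩; exact hnat m))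
  rw [← hP, hPQ, hQ]

end PowerSeries

theorem pscomp_eq_subst {f g : ℝ⟦X⟧} (hg : constantCoeff g = 0) : pscomp f g = f.subst g := by
  ext n
  rw [pscomp, coeff_mk, coeff_subst_eq_sum_range hg]

theorem factorial_mul_coeff_one_add_pow {E : ℝ⟦X⟧} (hE : constantCoeff E = 0) (i m : ℕ) :
    m ! * coeff m ((1 + E) ^ i) =
      ∑ k ∈ range (m + 1), (m ! * coeff m (E ^ k) / k !) * ffall i k := by
  rw [one_add_pow_eq_subst hE, coeff_subst_eq_sum_range hE, mul_sum]
  refine sum_congr rfl fun k _ => ?_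
  rw [coeff_binomialSeries]
  ring

theorem eq_coeff_of_forall_natCast {E : ℝ⟦X⟧} (hE : constantCoeff E = 0) {m : ℕ} {a : ℕ → ℝ}
    (h : ∀ i : ℕ, m ! * coeff m ((1 + E) ^ i) = ∑ k ∈ range (m + 1), a k * ffall i k)
    {k : ℕ} (hk : k ≤ m) : a k = m ! * coeff m (E ^ k) / k ! := by
  refine sub_eq_zero.1 (eq_zero_of_sum_mul_ffall_natCast_eq_zero
    (c := fun k => a k - m ! * coeff m (E ^ k) / k !) (fun i _ => ?_) k hk)
  simp only [sub_mul, sum_sub_distrib]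
  rw [← h, factorial_mul_coeff_one_add_pow hE, sub_self]

/-- The degenerate exponential `e_λ(t) = (1 + λt)^{1/λ}`. -/
def degExp (lam : ℝ) : ℝ⟦X⟧ := rescale lam (PowerSeries.binomialSeries ℝ lam⁻¹)

/-- The series of `X / (1 - cX)`. -/
def xGeom (c : ℝ) : ℝ⟦X⟧ := X * rescale c (PowerSeries.mk 1)

theorem constantCoeff_degExp (lam : ℝ) : constantCoeff (degExp lam) = 1 := by
  simp [degExp, ← coeff_zero_eq_constantCoeff_apply]

theorem constantCoeff_xGeom (c : ℝ) : constantCoeff (xGeom c) = 0 := by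
  simp [xGeom]

theorem constantCoeff_degLogSeries (lam : ℝ) : constantCoeff (degLogSeries lam) = 0 := by
  simp [degLogSeries, ← coeff_zero_eq_constantCoeff_apply]

theorem coeff_degExp_pow {lam : ℝ} (hlam : lam ≠ 0) (i l : ℕ) :
    coeff l (degExp lam ^ i) = dff lam i l / l ! := by
  rw [degExp, ← map_pow, PowerSeries.binomialSeries_pow, coeff_rescale, coeff_binomialSeries,
    dff_eq_pow_mul_ffall hlam, div_eq_mul_inv (i : ℝ) lam]
  ring

theorem degLogSeries_neg {lam : ℝ} (hlam : lam ≠ 0) :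
    degLogSeries (-lam) = lam⁻¹ • (1 - PowerSeries.binomialSeries ℝ (-lam)) := by
  ext n
  rcases n with _ | n
  · simp [degLogSeries]
  · rw [degLogSeries, coeff_mk, if_neg n.succ_ne_zero, coeff_smul, map_sub, coeff_one,
      if_neg n.succ_ne_zero, coeff_binomialSeries, dff_eq_pow_mul_ffall (by simpa),
      Nat.add_sub_cancel, one_div_one_div, pow_succ, ← mul_assoc, ← mul_assoc, ← mul_pow,
      mul_one_div_cancel (neg_ne_zero.2 hlam), one_pow, one_mul, one_div, inv_neg, smul_eq_mul]
    ring

theorem xGeom_mul_one_sub_smul_X (c : ℝ) : xGeom c * (1 - c • X) = X := by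
  have h : rescale c (PowerSeries.mk 1) * (1 - c • X) = 1 := by
    rw [smul_eq_C_mul, ← rescale_X, ← map_one (rescale c), ← map_sub, ← map_mul,
      mk_one_mul_one_sub_eq_one, map_one]
  rw [xGeom, mul_assoc, h, mul_one]

theorem one_add_xGeom_one :
    1 + xGeom 1 = rescale (-1) (PowerSeries.binomialSeries ℝ (-1 : ℝ)) := by
  have h : (PowerSeries.mk 1 : ℝ⟦X⟧) = 1 + X * PowerSeries.mk 1 := by
    linear_combination mk_one_mul_one_sub_eq_one (S := ℝ)
  ext k
  rw [xGeom, rescale_one, RingHom.id_apply, ← h, coeff_rescale, coeff_binomialSeries, ffall_neg,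
    frise_one, coeff_mk, Pi.one_apply]
  field_simp
  rw [← pow_mul, mul_comm, pow_mul, neg_one_sq, one_pow]

theorem coeff_one_add_xGeom_one_pow (i k : ℕ) :
    coeff k ((1 + xGeom 1) ^ i) = frise i k / k ! := by
  rw [one_add_xGeom_one, ← map_pow, PowerSeries.binomialSeries_pow, coeff_rescale,
    coeff_binomialSeries, mul_neg_one, ffall_neg, ← mul_div_assoc, ← mul_assoc, ← mul_pow,
    neg_one_mul, neg_neg, one_pow, one_mul]

theorem coeff_xGeom_pow (c : ℝ) {k l : ℕ} (h : l ≤ k) :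
    coeff k (xGeom c ^ l) = c ^ (k - l) * coeff k (xGeom 1 ^ l) := by
  simp only [xGeom, mul_pow, ← map_pow, coeff_X_pow_mul', if_pos h, coeff_rescale, one_pow, one_mul]

theorem degExp_sub_one_subst_xGeom_subst_degLogSeries {lam : ℝ} (hlam : lam ≠ 0) :
    (degExp lam - 1).subst ((xGeom lam).subst (degLogSeries (-lam))) = X := by
  have hL0 := constantCoeff_degLogSeries (-lam)
  have hL : lam • degLogSeries (-lam) = 1 - PowerSeries.binomialSeries ℝ (-lam) := by
    rw [degLogSeries_neg hlam, smul_smul, mul_inv_cancel₀ hlam, one_smul]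
  set w := (xGeom lam).subst (degLogSeries (-lam))
  have hwL : w * PowerSeries.binomialSeries ℝ (-lam) = degLogSeries (-lam) := by
    have := congrArg (substAlgHom (HasSubst.of_constantCoeff_zero' hL0))
      (xGeom_mul_one_sub_smul_X lam)
    rwa [map_mul, map_sub, map_one, map_smul, substAlgHom_X, coe_substAlgHom, hL,
      sub_sub_cancel] at this
  have hinv : PowerSeries.binomialSeries ℝ (-lam) * PowerSeries.binomialSeries ℝ lam = 1 := by
    rw [← binomialSeries_add, neg_add_cancel, binomialSeries_zero]
  have hlw : lam • w = PowerSeries.binomialSeries ℝ lam - 1 := by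
    calc lam • w
        = lam • (w * PowerSeries.binomialSeries ℝ (-lam)) * PowerSeries.binomialSeries ℝ lam := by
          rw [smul_mul_assoc, mul_assoc, hinv, mul_one]
      _ = PowerSeries.binomialSeries ℝ lam - 1 := by rw [hwL, hL, sub_mul, one_mul, hinv]
  have hE : degExp lam - 1 = rescale lam (PowerSeries.binomialSeries ℝ lam⁻¹ - 1) := by
    rw [degExp, map_sub, map_one]
  rw [hE, subst_rescale (constantCoeff_subst_eq_zero hL0 _ (constantCoeff_xGeom lam)), hlw,
    subst_sub (HasSubst.of_constantCoeff_zero' (by simp)), subst_one (by simp),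
    PowerSeries.binomialSeries_subst, mul_inv_cancel₀ hlam,
    show PowerSeries.binomialSeries ℝ (1 : ℝ) = 1 + X by
      simpa using binomialSeries_nat (R := ℝ) (A := ℝ) 1,
    add_sub_cancel_left]

theorem eq_degExp_sub_one_subst_xGeom_subst_degLogSeries_subst {lam : ℝ} (hlam : lam ≠ 0)
    {A : ℝ⟦X⟧} (hA : constantCoeff A = 0) :
    A = (degExp lam - 1).subst ((xGeom lam).subst ((degLogSeries (-lam)).subst A)) := by
  have hL0 := constantCoeff_degLogSeries (-lam)
  have hw0 := constantCoeff_subst_eq_zero hL0 _ (constantCoeff_xGeom lam)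
  have hsA := HasSubst.of_constantCoeff_zero' hA
  rw [← subst_comp_subst_apply (HasSubst.of_constantCoeff_zero' hL0) hsA,
    ← subst_comp_subst_apply (HasSubst.of_constantCoeff_zero' hw0) hsA,
    degExp_sub_one_subst_xGeom_subst_degLogSeries hlam, subst_X hsA]

theorem degStirling2_eq {lam : ℝ} (hlam : lam ≠ 0) {St2 : ℕ → ℕ → ℝ}
    (hSt2 : ∀ (x : ℝ) (n : ℕ), dff lam x n = ∑ k ∈ range (n + 1), St2 n k * ffall x k)
    {l j : ℕ} (hjl : j ≤ l) : St2 l j = l ! * coeff l ((degExp lam - 1) ^ j) / j ! :=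
  eq_coeff_of_forall_natCast (by simp [constantCoeff_degExp]) (fun i => by
    rw [add_sub_cancel, coeff_degExp_pow hlam, ← hSt2, mul_div_cancel₀ _ (by positivity)]) hjl

theorem pow_mul_lah_eq {Lah : ℕ → ℕ → ℝ}
    (hLah : ∀ (x : ℝ) (n : ℕ), frise x n = ∑ k ∈ range (n + 1), Lah n k * ffall x k)
    (c : ℝ) {k l : ℕ} (hlk : l ≤ k) :
    c ^ (k - l) * Lah k l = k ! * coeff k (xGeom c ^ l) / l ! := by
  rw [coeff_xGeom_pow c hlk, eq_coeff_of_forall_natCast (a := Lah k) (constantCoeff_xGeom 1)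
    (fun i => by rw [coeff_one_add_xGeom_one_pow, ← hLah, mul_div_cancel₀ _ (by positivity)]) hlk]
  ring

section Probabilistic

variable {Ω : Type*} [MeasurableSpace Ω] (μ : Measure Ω) (lam : ℝ) (Y : Ω → ℝ)

theorem constantCoeff_momSeries [IsProbabilityMeasure μ] :
    constantCoeff (momSeries lam μ Y) = 1 := by
  simp [momSeries, ← coeff_zero_eq_constantCoeff_apply, dff]

theorem cumSeries_eq_subst [IsProbabilityMeasure μ] :
    cumSeries lam μ Y = (degLogSeries (-lam)).subst (momSeries lam μ Y - 1) :=
  pscomp_eq_subst (by simp [constantCoeff_momSeries])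

theorem neg_one_pow_mul_S1Y (n k : ℕ) :
    (-1) ^ (n - k) * S1Y lam μ Y n k = n ! * coeff n (cumSeries lam μ Y ^ k) / k ! := by
  rw [S1Y, ← mul_assoc, ← pow_add, Even.neg_one_pow ⟨_, rfl⟩, one_mul]

end Probabilistic

theorem braceY_eq_sum_S1Y_Lah_degStirling2_general {Ω : Type*} [MeasurableSpace Ω] (μ : MeasureTheory.Measure Ω)
    [MeasureTheory.IsProbabilityMeasure μ] (Y : Ω → ℝ)
    (lam : ℝ) (hlam : lam ≠ 0)
    (St2 : ℕ → ℕ → ℝ)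
    (hSt2 : ∀ (x : ℝ) (n : ℕ),
      dff lam x n = ∑ k ∈ Finset.range (n + 1), St2 n k * ffall x k)
    (Lah : ℕ → ℕ → ℝ)
    (hLah : ∀ (x : ℝ) (n : ℕ),
      frise x n = ∑ k ∈ Finset.range (n + 1), Lah n k * ffall x k)
    (n j : ℕ) :
    braceY lam μ Y n j =
      ∑ l ∈ Finset.Icc j n, ∑ k ∈ Finset.Icc l n,
        lam ^ (k - l) * (-1 : ℝ) ^ (n - k) * S1Y lam μ Y n k * Lah k l * St2 l j := by
  have hA : constantCoeff (momSeries lam μ Y - 1) = 0 := by simp [constantCoeff_momSeries]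
  have hG : constantCoeff (cumSeries lam μ Y) = 0 := by
    rw [cumSeries_eq_subst]
    exact constantCoeff_subst_eq_zero hA _ (constantCoeff_degLogSeries _)
  calc braceY lam μ Y n j = n ! / j ! * coeff n ((momSeries lam μ Y - 1) ^ j) := by
        rw [braceY]; ring
    _ = ∑ l ∈ Icc j n, ∑ k ∈ Icc l n, n ! / j ! * (coeff l ((degExp lam - 1) ^ j) *
          coeff k (xGeom lam ^ l) * coeff n (cumSeries lam μ Y ^ k)) := by
      rw [eq_degExp_sub_one_subst_xGeom_subst_degLogSeries_subst hlam hA, ← cumSeries_eq_subst,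
        coeff_pow_subst_subst (by simp [constantCoeff_degExp]) (constantCoeff_xGeom lam) hG]
      simp only [mul_sum]
    _ = _ := by
      refine sum_congr rfl fun l hl => sum_congr rfl fun k hk => ?_
      rw [mem_Icc] at hl hk
      rw [show lam ^ (k - l) * (-1) ^ (n - k) * S1Y lam μ Y n k * Lah k l * St2 l j =
          (lam ^ (k - l) * Lah k l) * ((-1) ^ (n - k) * S1Y lam μ Y n k) * St2 l j by ring,
        pow_mul_lah_eq hLah lam hk.1, neg_one_pow_mul_S1Y, degStirling2_eq hlam hSt2 hl.1]
      field_simp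

theorem braceY_eq_sum_S1Y_Lah_degStirling2 {Ω : Type*} [MeasurableSpace Ω] (μ : MeasureTheory.Measure Ω)
    [MeasureTheory.IsProbabilityMeasure μ] (Y : Ω → ℝ) (hY : Measurable Y)
    (hmom : ∀ n : ℕ, MeasureTheory.Integrable (fun ω => |Y ω| ^ n) μ)
    (lam : ℝ) (hlam : lam ≠ 0)
    (St2 : ℕ → ℕ → ℝ)
    (hSt2 : ∀ (x : ℝ) (n : ℕ),
      dff lam x n = ∑ k ∈ Finset.range (n + 1), St2 n k * ffall x k)
    (Lah : ℕ → ℕ → ℝ)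
    (hLah : ∀ (x : ℝ) (n : ℕ),
      frise x n = ∑ k ∈ Finset.range (n + 1), Lah n k * ffall x k)
    (n j : ℕ) (hjn : j ≤ n) :
    braceY lam μ Y n j =
      ∑ l ∈ Finset.Icc j n, ∑ k ∈ Finset.Icc l n,
        lam ^ (k - l) * (-1 : ℝ) ^ (n - k) * S1Y lam μ Y n k * Lah k l * St2 l j :=
  braceY_eq_sum_S1Y_Lah_degStirling2_general μ Y lam hlam St2 hSt2 Lah hLah n j

end
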